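/- arXiv:2308.12829 — 2 statements merged into one kernel-verified Lean document; each statement's English description precedes it below -/
import Mathlib

section
/- Let m: (0,∞) → ℂ satisfy the Mihlin condition |m^{(k)}(λ)| ≲ λ^{−k} for 0 ≤ k ≤ 2, and let \tilde m be its even extension. Then \widehat{\tilde m} admits a bounded antiderivative on ℝ \ {0}: there exists a function F with |F(t)| ≲ 1 and F' = \widehat{\tilde m} away from 0. -/
/-!
Take `F(t) = ∫ m̃(λ) (1 - e^{-iλt}) / (iλ) dλ`. The kernel is `O(|t|)`, so differentiation under
the integral sign shows that `F'` is the Fourier transform of `m̃`. Since `m̃` is even, pairing `λ`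
with `-λ` turns `F(t)` into `2 ∫₀^∞ m(λ) sin(λt) / λ dλ`. On `(0, 1/|t|]` the integrand is at
most `‖m‖_∞ |t|`. On `[1/|t|, ∞)` one integrates `sin(λt)` by parts against `m(λ)/λ`, whose
derivative is `O(λ⁻²)` by the Mihlin bounds of order `0` and `1`. Both pieces are bounded
independently of `t`.

If `m̃` is not integrable, the Bochner integral defining the transform is `0`, and `F = 0` works.
-/

open MeasureTheory Real Complex

/-- The Fourier transform `ĝ(t) = ∫ g(λ) e^{−iλt} dλ`. -/
noncomputable def FT (g : ℝ → ℂ) (t : ℝ) : ℂ :=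
  ∫ l : ℝ, g l * Complex.exp (-(Complex.I * l * t))

open Set Filter

lemma norm_exp_neg_I_mul (l t : ℝ) : ‖Complex.exp (-(I * l * t))‖ = 1 := by
  rw [show -(I * l * t) = ((-(l * t) : ℝ) : ℂ) * I by push_cast; ring, norm_exp_ofReal_mul_I]

/-- At `l = 0` division by zero makes this `0` rather than `t`; only a null set is affected. -/
noncomputable def fourierPrimitiveKernel (l t : ℝ) : ℂ :=
  (1 - Complex.exp (-(I * l * t))) / (I * l)

noncomputable def fourierPrimitive (g : ℝ → ℂ) (t : ℝ) : ℂ :=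
  ∫ l, g l * fourierPrimitiveKernel l t

lemma norm_fourierPrimitiveKernel_le (l t : ℝ) : ‖fourierPrimitiveKernel l t‖ ≤ |t| := by
  rcases eq_or_ne l 0 with rfl | hl
  · simp [fourierPrimitiveKernel]
  rw [fourierPrimitiveKernel, norm_div, norm_mul, norm_I, one_mul, norm_real, Real.norm_eq_abs,
    div_le_iff₀ (abs_pos.2 hl)]
  have hexp : -(I * l * t) = I * ((-(l * t) : ℝ) : ℂ) := by push_cast; ring
  calc ‖1 - Complex.exp (-(I * l * t))‖ = ‖Complex.exp (I * ((-(l * t) : ℝ) : ℂ)) - 1‖ := by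
        rw [hexp, norm_sub_rev]
    _ ≤ ‖-(l * t)‖ := norm_exp_I_mul_ofReal_sub_one_le
    _ = |t| * |l| := by rw [norm_neg, Real.norm_eq_abs, abs_mul, mul_comm]

lemma measurable_fourierPrimitiveKernel (t : ℝ) :
    Measurable fun l => fourierPrimitiveKernel l t := by
  unfold fourierPrimitiveKernel; fun_prop

lemma hasDerivAt_fourierPrimitiveKernel {l : ℝ} (hl : l ≠ 0) (t : ℝ) :
    HasDerivAt (fourierPrimitiveKernel l) (Complex.exp (-(I * l * t))) t := by
  have hlin : HasDerivAt (fun s : ℝ => -(I * l * s)) (-(I * l)) t := by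
    simpa using ((hasDerivAt_id (t : ℂ)).const_mul (-(I * l))).comp_ofReal
  have hlC : (l : ℂ) ≠ 0 := ofReal_ne_zero.2 hl
  exact ((hlin.cexp.const_sub 1).div_const (I * l)).congr_deriv (by field_simp)

lemma MeasureTheory.Integrable.mul_fourierPrimitiveKernel {g : ℝ → ℂ} (hg : Integrable g)
    (t : ℝ) :
    Integrable fun l => g l * fourierPrimitiveKernel l t :=
  hg.mul_bdd (measurable_fourierPrimitiveKernel t).aestronglyMeasurable
    (.of_forall fun l => norm_fourierPrimitiveKernel_le l t)

theorem hasDerivAt_fourierPrimitive {g : ℝ → ℂ} (hg : Integrable g) (t : ℝ) :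
    HasDerivAt (fourierPrimitive g) (FT g t) t := by
  have hne : ∀ᵐ l : ℝ, l ≠ 0 := by simp [ae_iff, measure_singleton]
  refine (hasDerivAt_integral_of_dominated_loc_of_deriv_le (bound := fun l => ‖g l‖)
    (F' := fun s l => g l * Complex.exp (-(I * l * s))) (Metric.ball_mem_nhds t one_pos)
    (.of_forall fun s => (hg.mul_fourierPrimitiveKernel s).aestronglyMeasurable)
    (hg.mul_fourierPrimitiveKernel t) (hg.aestronglyMeasurable.mul (by fun_prop))
    (.of_forall fun l s _ => by rw [norm_mul, norm_exp_neg_I_mul, mul_one]) hg.norm ?_).2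
  filter_upwards [hne] with l hl s _
  exact (hasDerivAt_fourierPrimitiveKernel hl s).const_mul (g l)

lemma FT_eq_zero_of_not_integrable {g : ℝ → ℂ} (hg : ¬Integrable g) : FT g = 0 := by
  ext t
  refine integral_undef fun hint => hg ?_
  refine (hint.mul_bdd (c := 1) (g := fun l : ℝ => Complex.exp (I * l * t))
    (Continuous.aestronglyMeasurable (by fun_prop))
    (.of_forall fun l => by simpa using (norm_exp_neg_I_mul l (-t)).le)).congr
    (.of_forall fun l => ?_)
  simp [mul_assoc, ← Complex.exp_add]

lemma fourierPrimitiveKernel_add_neg (l t : ℝ) :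
    fourierPrimitiveKernel l t + fourierPrimitiveKernel (-l) t =
      ((2 * (Real.sin (l * t) / l) : ℝ) : ℂ) := by
  rcases eq_or_ne l 0 with rfl | hl
  · simp [fourierPrimitiveKernel]
  have hlC : (l : ℂ) ≠ 0 := ofReal_ne_zero.2 hl
  simp only [fourierPrimitiveKernel]
  push_cast
  rw [Complex.sin]
  field_simp
  ring_nf
  rw [I_sq]
  ring

lemma abs_sin_mul_div_le (l t : ℝ) : |Real.sin (l * t) / l| ≤ |t| := by
  rcases eq_or_ne l 0 with rfl | hl
  · simp
  rw [abs_div, div_le_iff₀ (abs_pos.2 hl), ← abs_mul, mul_comm t]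
  exact abs_sin_le_abs

lemma integral_eq_integral_Ioi_add_comp_neg {E : Type*} [NormedAddCommGroup E] [NormedSpace ℝ E]
    {f : ℝ → E} (hf : Integrable f) : ∫ x, f x = ∫ x in Ioi 0, (f x + f (-x)) := by
  rw [integral_add hf.integrableOn hf.comp_neg.integrableOn, integral_comp_neg_Ioi, neg_zero,
    add_comm, intervalIntegral.integral_Iic_add_Ioi hf.integrableOn hf.integrableOn]

lemma MeasureTheory.Integrable.mul_sin_mul_div {g : ℝ → ℂ} (hg : Integrable g) (t : ℝ) :
    Integrable fun l => g l * ((Real.sin (l * t) / l : ℝ) : ℂ) :=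
  hg.mul_bdd (Measurable.aestronglyMeasurable (by fun_prop)) (.of_forall fun l => by
    simpa only [norm_real, Real.norm_eq_abs] using abs_sin_mul_div_le l t)

theorem fourierPrimitive_eq_integral_Ioi_of_even {g : ℝ → ℂ} (hg : Integrable g)
    (heven : ∀ l, g (-l) = g l) (t : ℝ) :
    fourierPrimitive g t = 2 * ∫ l in Ioi 0, g l * ((Real.sin (l * t) / l : ℝ) : ℂ) := by
  rw [fourierPrimitive, integral_eq_integral_Ioi_add_comp_neg (hg.mul_fourierPrimitiveKernel t),
    ← integral_const_mul]
  refine setIntegral_congr_fun measurableSet_Ioi fun l _ => ?_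
  rw [heven, ← mul_add, fourierPrimitiveKernel_add_neg]
  push_cast
  ring

lemma integral_inv_sq {a b : ℝ} (ha : 0 < a) (hab : a ≤ b) :
    ∫ x in a..b, (x ^ 2)⁻¹ = a⁻¹ - b⁻¹ := by
  have hpos : ∀ x ∈ uIcc a b, 0 < x := by
    rw [uIcc_of_le hab]; exact fun x hx => ha.trans_le hx.1
  rw [intervalIntegral.integral_eq_sub_of_hasDerivAt (f := fun x => -x⁻¹)
    (f' := fun x => (x ^ 2)⁻¹) (fun x hx => by simpa using (hasDerivAt_inv (hpos x hx).ne').fun_neg)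
    (ContinuousOn.intervalIntegrable ((continuousOn_pow 2).inv₀ fun x hx =>
      pow_ne_zero 2 (hpos x hx).ne'))]
  ring

lemma norm_intervalIntegral_le_of_norm_le_div_sq {f : ℝ → ℂ} {K a b : ℝ} (hK : 0 ≤ K)
    (ha : 0 < a) (hab : a ≤ b) (hf : ∀ x ∈ Ioc a b, ‖f x‖ ≤ K / x ^ 2) :
    ‖∫ x in a..b, f x‖ ≤ K / a := by
  have hpos : ∀ x ∈ uIcc a b, 0 < x := by
    rw [uIcc_of_le hab]; exact fun x hx => ha.trans_le hx.1
  calc ‖∫ x in a..b, f x‖ ≤ ∫ x in a..b, K * (x ^ 2)⁻¹ :=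
        intervalIntegral.norm_integral_le_of_norm_le hab (.of_forall fun x hx => hf x hx)
          (ContinuousOn.intervalIntegrable (continuousOn_const.mul
            ((continuousOn_pow 2).inv₀ fun x hx => pow_ne_zero 2 (hpos x hx).ne')))
    _ = K * (a⁻¹ - b⁻¹) := by rw [intervalIntegral.integral_const_mul, integral_inv_sq ha hab]
    _ ≤ K * a⁻¹ := by gcongr; exact sub_le_self _ (inv_nonneg.2 (ha.le.trans hab))
    _ = K / a := (div_eq_mul_inv K a).symm

section SineIntegral

variable {t : ℝ}

lemma norm_intervalIntegral_mul_sin_le {u u' : ℝ → ℂ} {A B R : ℝ}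
    (hu : ∀ l, 0 < l → HasDerivAt u (u' l) l) (hu' : ContinuousOn u' (Ioi 0))
    (hA : ∀ l, 0 < l → ‖u l‖ ≤ A / l) (hB : ∀ l, 0 < l → ‖u' l‖ ≤ B / l ^ 2) (ht : t ≠ 0)
    (hR : |t|⁻¹ ≤ R) :
    ‖∫ l in |t|⁻¹..R, u l * Real.sin (l * t)‖ ≤ 2 * A + B := by
  set a := |t|⁻¹
  have ha : 0 < a := by positivity
  have hpos : ∀ l ∈ uIcc a R, 0 < l := by
    rw [uIcc_of_le hR]; exact fun x hx => ha.trans_le hx.1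
  have hA₀ : 0 ≤ A := by simpa using (norm_nonneg _).trans (hA 1 one_pos)
  have hB₀ : 0 ≤ B := by simpa using (norm_nonneg _).trans (hB 1 one_pos)
  set v : ℝ → ℂ := fun l => ((-Real.cos (l * t) / t : ℝ) : ℂ)
  have hv : ∀ l ∈ uIcc a R, HasDerivAt v (Real.sin (l * t) : ℂ) l := fun l _ =>
    (((hasDerivAt_mul_const t).cos.neg.div_const t).congr_deriv (by field_simp)).ofReal_comp
  have hv_le : ∀ l, ‖v l‖ ≤ a := fun l => by
    rw [norm_real, Real.norm_eq_abs, abs_div, abs_neg, div_eq_mul_inv]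
    exact mul_le_of_le_one_left (by positivity) (abs_cos_le_one _)
  have hboundary : ∀ l, a ≤ l → ‖u l * v l‖ ≤ A := fun l hl => by
    have hl₀ : 0 < l := ha.trans_le hl
    calc ‖u l * v l‖ ≤ A / l * a := by
          rw [norm_mul]
          exact mul_le_mul (hA l hl₀) (hv_le l) (norm_nonneg _) (by positivity)
      _ ≤ A := by
          rw [div_mul_eq_mul_div, div_le_iff₀ hl₀]
          exact mul_le_mul_of_nonneg_left hl hA₀
  have hremainder : ‖∫ l in a..R, u' l * v l‖ ≤ B := by
    calc ‖∫ l in a..R, u' l * v l‖ ≤ B * a / a := by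
          refine norm_intervalIntegral_le_of_norm_le_div_sq (by positivity) ha hR fun l hl => ?_
          rw [norm_mul, mul_div_right_comm]
          exact mul_le_mul (hB l (ha.trans hl.1)) (hv_le l) (norm_nonneg _) (by positivity)
      _ = B := mul_div_cancel_right₀ _ ha.ne'
  rw [intervalIntegral.integral_mul_deriv_eq_deriv_mul (fun l hl => hu l (hpos l hl)) hv
    ((hu'.mono hpos).intervalIntegrable) (Continuous.intervalIntegrable (by fun_prop) a R)]
  calc _ ≤ ‖u R * v R‖ + ‖u a * v a‖ + ‖∫ l in a..R, u' l * v l‖ :=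
        (norm_sub_le _ _).trans (add_le_add_left (norm_sub_le _ _) _)
    _ ≤ A + A + B := add_le_add (add_le_add (hboundary R hR) (hboundary a le_rfl)) hremainder
    _ = 2 * A + B := by ring

variable {m m' : ℝ → ℂ} {C₀ C₁ : ℝ}

lemma norm_integral_Ioc_mul_sin_div_le (h₀ : ∀ l, 0 < l → ‖m l‖ ≤ C₀) (ht : t ≠ 0) :
    ‖∫ l in Ioc 0 |t|⁻¹, m l * ((Real.sin (l * t) / l : ℝ) : ℂ)‖ ≤ C₀ := by
  have hbound : ∀ l ∈ Ioc 0 |t|⁻¹, ‖m l * ((Real.sin (l * t) / l : ℝ) : ℂ)‖ ≤ C₀ * |t| := by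
    intro l hl
    rw [norm_mul, norm_real, Real.norm_eq_abs]
    exact mul_le_mul (h₀ l hl.1) (abs_sin_mul_div_le l t) (abs_nonneg _)
      ((norm_nonneg _).trans (h₀ l hl.1))
  calc _ ≤ C₀ * |t| * volume.real (Ioc 0 |t|⁻¹) :=
        norm_setIntegral_le_of_norm_le_const measure_Ioc_lt_top hbound
    _ = C₀ := by
        rw [Real.volume_real_Ioc_of_le (by positivity), sub_zero, mul_assoc,
          mul_inv_cancel₀ (abs_pos.2 ht).ne', mul_one]

lemma norm_intervalIntegral_mul_sin_div_le (hm : ∀ l, 0 < l → HasDerivAt m (m' l) l)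
    (hm' : ContinuousOn m' (Ioi 0)) (h₀ : ∀ l, 0 < l → ‖m l‖ ≤ C₀)
    (h₁ : ∀ l, 0 < l → ‖m' l‖ ≤ C₁ / l) (ht : t ≠ 0) {R : ℝ} (hR : |t|⁻¹ ≤ R) :
    ‖∫ l in |t|⁻¹..R, m l * ((Real.sin (l * t) / l : ℝ) : ℂ)‖ ≤ 3 * C₀ + C₁ := by
  have hne : ∀ l ∈ Ioi (0 : ℝ), (l : ℂ) ≠ 0 := fun l hl => ofReal_ne_zero.2 (ne_of_gt hl)
  have hderiv : ∀ l, 0 < l → HasDerivAt (fun l => m l / l) (m' l / l - m l / l ^ 2) l :=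
    fun l hl => ((hm l hl).div (hasDerivAt_id (l : ℂ)).comp_ofReal (hne l hl)).congr_deriv
      (by have := hne l hl; simp only [id]; field_simp)
  have hmc : ContinuousOn m (Ioi 0) := fun l hl => (hm l hl).continuousAt.continuousWithinAt
  have hderiv_le : ∀ l, 0 < l → ‖m' l / l - m l / l ^ 2‖ ≤ (C₀ + C₁) / l ^ 2 := fun l hl => by
    calc ‖m' l / l - m l / l ^ 2‖ ≤ ‖m' l / l‖ + ‖m l / l ^ 2‖ := norm_sub_le _ _
      _ ≤ C₁ / l / l + C₀ / l ^ 2 := by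
          rw [norm_div, norm_div, norm_pow, norm_real, Real.norm_of_nonneg hl.le]
          gcongr
          exacts [h₁ l hl, h₀ l hl]
      _ = (C₀ + C₁) / l ^ 2 := by field_simp; ring
  have hbound := norm_intervalIntegral_mul_sin_le hderiv
    ((hm'.div (by fun_prop) hne).sub (hmc.div (by fun_prop) fun l hl => pow_ne_zero 2 (hne l hl)))
    (fun l hl => by
      rw [norm_div, norm_real, Real.norm_of_nonneg hl.le]; gcongr; exact h₀ l hl)
    hderiv_le ht hR
  calc _ = ‖∫ l in |t|⁻¹..R, m l / l * Real.sin (l * t)‖ := by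
        congr 1
        refine intervalIntegral.integral_congr fun l _ => ?_
        push_cast
        ring
    _ ≤ 2 * C₀ + (C₀ + C₁) := hbound
    _ = 3 * C₀ + C₁ := by ring

theorem norm_integral_Ioi_mul_sin_div_le (hm : ∀ l, 0 < l → HasDerivAt m (m' l) l)
    (hm' : ContinuousOn m' (Ioi 0)) (h₀ : ∀ l, 0 < l → ‖m l‖ ≤ C₀)
    (h₁ : ∀ l, 0 < l → ‖m' l‖ ≤ C₁ / l)
    (hint : IntegrableOn (fun l => m l * ((Real.sin (l * t) / l : ℝ) : ℂ)) (Ioi 0)) :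
    ‖∫ l in Ioi 0, m l * ((Real.sin (l * t) / l : ℝ) : ℂ)‖ ≤ 4 * C₀ + C₁ := by
  have hC₀ : 0 ≤ C₀ := (norm_nonneg _).trans (h₀ 1 one_pos)
  have hC₁ : 0 ≤ C₁ := by simpa using (norm_nonneg _).trans (h₁ 1 one_pos)
  rcases eq_or_ne t 0 with rfl | ht
  · simpa using by positivity
  have ha : 0 < |t|⁻¹ := by positivity
  have htail : ‖∫ l in Ioi |t|⁻¹, m l * ((Real.sin (l * t) / l : ℝ) : ℂ)‖ ≤ 3 * C₀ + C₁ :=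
    le_of_tendsto (intervalIntegral_tendsto_integral_Ioi _
      (hint.mono_set (Ioi_subset_Ioi ha.le)) tendsto_id).norm
      (eventually_atTop.2 ⟨_, fun R hR => norm_intervalIntegral_mul_sin_div_le hm hm' h₀ h₁ ht hR⟩)
  rw [← Ioc_union_Ioi_eq_Ioi ha.le, setIntegral_union (Ioc_disjoint_Ioi le_rfl) measurableSet_Ioi
    (hint.mono_set Ioc_subset_Ioi_self) (hint.mono_set (Ioi_subset_Ioi ha.le))]
  calc _ ≤ _ := norm_add_le _ _
    _ ≤ C₀ + (3 * C₀ + C₁) := add_le_add (norm_integral_Ioc_mul_sin_div_le h₀ ht) htail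
    _ = 4 * C₀ + C₁ := by ring

end SineIntegral

/-- if `m : (0,∞) → ℂ` satisfies the Mihlin condition
`|m^{(k)}(λ)| ≲ λ^{−k}` for `0 ≤ k ≤ 2` and `\tilde m(λ) = m(|λ|)` is its even
extension, then `\widehat{\tilde m}` admits a bounded antiderivative on `ℝ \ {0}`:
there is `F` with `|F(t)| ≲ 1` and `F' = \widehat{\tilde m}` away from `0`. -/
theorem stmt10 (m : ℝ → ℂ) (Ck : ℕ → ℝ)
    (hm : ContDiffOn ℝ 2 m (Set.Ioi 0))
    (hmihlin : ∀ k : ℕ, k ≤ 2 → ∀ l : ℝ, 0 < l →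
      ‖iteratedDerivWithin k m (Set.Ioi 0) l‖ ≤ Ck k * l ^ (-(k : ℝ)))
    (tm : ℝ → ℂ) (htm : ∀ l : ℝ, tm l = m |l|) :
    ∃ F : ℝ → ℂ, (∃ C : ℝ, ∀ t : ℝ, ‖F t‖ ≤ C) ∧
      ∀ t : ℝ, t ≠ 0 → HasDerivAt F (FT tm t) t := by
  by_cases hint : Integrable tm
  swap
  · refine ⟨0, ⟨0, fun _ => by simp⟩, fun t _ => ?_⟩
    rw [FT_eq_zero_of_not_integrable hint]
    exact hasDerivAt_const t 0
  have hderiv : ∀ l, 0 < l → HasDerivAt m (deriv m l) l := fun l hl =>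
    ((hm.differentiableOn two_ne_zero).differentiableAt (Ioi_mem_nhds hl)).hasDerivAt
  have h₀ : ∀ l, 0 < l → ‖m l‖ ≤ Ck 0 := fun l hl => by simpa using hmihlin 0 (by norm_num) l hl
  have h₁ : ∀ l, 0 < l → ‖deriv m l‖ ≤ Ck 1 / l := fun l hl => by
    have := hmihlin 1 (by norm_num) l hl
    rwa [iteratedDerivWithin_one, derivWithin_of_isOpen isOpen_Ioi hl, Nat.cast_one,
      Real.rpow_neg_one, ← div_eq_mul_inv] at this
  have hsine : ∀ t, EqOn (fun l => tm l * ((Real.sin (l * t) / l : ℝ) : ℂ))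
      (fun l => m l * ((Real.sin (l * t) / l : ℝ) : ℂ)) (Ioi 0) := fun t l hl => by
    simp only [htm, abs_of_pos (show 0 < l from hl)]
  refine ⟨fourierPrimitive tm, ⟨2 * (4 * Ck 0 + Ck 1), fun t => ?_⟩,
    fun t _ => hasDerivAt_fourierPrimitive hint t⟩
  rw [fourierPrimitive_eq_integral_Ioi_of_even hint (fun l => by simp [htm]) t,
    setIntegral_congr_fun measurableSet_Ioi (hsine t), norm_mul, Complex.norm_two]
  gcongr
  exact norm_integral_Ioi_mul_sin_div_le hderiv (hm.continuousOn_deriv_of_isOpen isOpen_Ioi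
    one_le_two) h₀ h₁ ((hint.mul_sin_mul_div t).integrableOn.congr_fun (hsine t) measurableSet_Ioi)
end

section
/- Let b ∈ L¹(ℝ³) satisfy ∫ b = 0 and ‖|y−z| b(y)‖_{L¹} < ∞ for some z ∈ ℝ³, and let V have finite global Kato norm. Then ∫_{ℝ³} |x−z| |[V(−Δ)^{−1}b](x)| dx ≲ ‖V‖_𝒦 · ‖|y−z| b(y)‖_{L¹}, i.e., V(−Δ)^{−1} preserves the weighted space |y−z|^{−1}L¹ on mean-zero functions. -/
open MeasureTheory Real

noncomputable abbrev E3 := EuclideanSpace ℝ (Fin 3)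

/-- `(−Δ)^{−1}`, with kernel `1/(4π|x−y|)` on `ℝ³`. -/
noncomputable def invLap (b : E3 → ℝ) (x : E3) : ℝ :=
  ∫ y, b y / (4 * π * ‖x - y‖)

/-!
Subtracting `b(y)/‖x−z‖`, which integrates to zero in `y`, replaces the kernel `‖x−y‖⁻¹` by
`‖x−y‖⁻¹ − ‖x−z‖⁻¹`, and `‖x−z‖ · |‖x−y‖⁻¹ − ‖x−z‖⁻¹| ≤ ‖y−z‖ · ‖x−y‖⁻¹` by the triangle
inequality. So the weighted integral is at most `(4π)⁻¹ ∫∫ |V(x)| ‖y−z‖ |b(y)| / ‖x−y‖`, and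
Tonelli followed by the Kato bound in `x` gives `(4π)⁻¹ K ‖|y−z| b‖₁`.

As `V` is not assumed measurable, Tonelli is applied to a measurable minorant of `|V|`; building
it needs the potential `∫ ‖y−z‖ |b(y)| / ‖x−y‖ dy` to be finite for a.e. `x`, which holds because
`‖·‖⁻¹` is locally integrable in dimension `3`.
-/

open Metric Set ENNReal

section Schur

variable {α β : Type*} [MeasurableSpace α] [MeasurableSpace β] {μ : Measure α} {ν : Measure β}

theorem exists_aemeasurable_le_lintegral_mul_le {f J : α → ℝ≥0∞} (hJ : AEMeasurable J μ)
    (hJ_fin : ∀ᵐ x ∂μ, J x ≠ ∞) :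
    ∃ W : α → ℝ≥0∞, AEMeasurable W μ ∧ W ≤ f ∧ ∫⁻ x, f x * J x ∂μ ≤ ∫⁻ x, W x * J x ∂μ := by
  obtain ⟨g, hg, hgf, hfg⟩ := exists_measurable_le_lintegral_eq μ (fun x => f x * J x)
  refine ⟨fun x => g x / J x, hg.aemeasurable.div hJ, fun x => div_le_of_le_mul (hgf x), ?_⟩
  refine hfg.trans_le (lintegral_mono_ae (hJ_fin.mono fun x hx => ?_))
  rcases eq_or_ne (J x) 0 with h0 | h0
  · simpa [h0] using hgf x
  · rw [ENNReal.div_mul_cancel h0 hx]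

theorem lintegral_mul_lintegral_mul_le [SFinite μ] [SFinite ν] {f : α → ℝ≥0∞}
    {c : β → ℝ≥0∞} {k : α → β → ℝ≥0∞} {K : ℝ≥0∞} (hc : AEMeasurable c ν)
    (hk : Measurable (Function.uncurry k)) (hfin : ∀ᵐ x ∂μ, ∫⁻ y, c y * k x y ∂ν ≠ ∞)
    (hK : ∀ y, ∫⁻ x, f x * k x y ∂μ ≤ K) :
    ∫⁻ x, f x * ∫⁻ y, c y * k x y ∂ν ∂μ ≤ K * ∫⁻ y, c y ∂ν := by
  have hck : AEMeasurable (fun p : α × β => c p.2 * k p.1 p.2) (μ.prod ν) :=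
    hc.comp_snd.mul hk.aemeasurable
  obtain ⟨W, hW, hWf, hfW⟩ := exists_aemeasurable_le_lintegral_mul_le hck.lintegral_prod_right' hfin
  calc ∫⁻ x, f x * ∫⁻ y, c y * k x y ∂ν ∂μ
      ≤ ∫⁻ x, ∫⁻ y, W x * (c y * k x y) ∂ν ∂μ := by
        refine hfW.trans_eq (lintegral_congr fun x => ?_)
        exact (lintegral_const_mul'' _ (hc.mul (hk.comp measurable_prodMk_left).aemeasurable)).symm
    _ = ∫⁻ y, c y * ∫⁻ x, W x * k x y ∂μ ∂ν := by
        rw [lintegral_lintegral_swap (hW.comp_fst.mul hck)]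
        refine lintegral_congr fun y => ?_
        simp_rw [mul_left_comm (W _)]
        exact lintegral_const_mul'' _ (hW.mul (hk.comp measurable_prodMk_right).aemeasurable)
    _ ≤ ∫⁻ y, c y * K ∂ν := by
        gcongr with y
        exact (lintegral_mono fun x => mul_le_mul_left (hWf x) _).trans (hK y)
    _ = K * ∫⁻ y, c y ∂ν := by rw [lintegral_mul_const'' _ hc, mul_comm]

end Schur

theorem setLIntegral_ball_inv_norm_sub_le {G : Type*} [NormedAddCommGroup G] [MeasurableSpace G]
    [BorelSpace G] {μ : Measure G} [μ.IsAddRightInvariant] (y : G) (r : ℝ) :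
    ∫⁻ x in ball 0 r, ENNReal.ofReal ‖x - y‖⁻¹ ∂μ ≤
      ∫⁻ u in ball 0 1, ENNReal.ofReal ‖u‖⁻¹ ∂μ + μ (ball 0 r) := by
  set φ : G → ℝ≥0∞ := (ball 0 1).indicator fun u => ENNReal.ofReal ‖u‖⁻¹
  have hφ : ∀ u : G, ENNReal.ofReal ‖u‖⁻¹ ≤ φ u + 1 := by
    intro u
    by_cases hu : u ∈ ball (0 : G) 1
    · simp [φ, indicator_of_mem hu]
    · rw [mem_ball_zero_iff, not_lt] at hu
      simpa [φ, hu] using inv_le_one_of_one_le₀ hu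
  calc ∫⁻ x in ball 0 r, ENNReal.ofReal ‖x - y‖⁻¹ ∂μ
      ≤ ∫⁻ x in ball 0 r, (φ (x - y) + 1) ∂μ := lintegral_mono fun x => hφ (x - y)
    _ = ∫⁻ x in ball 0 r, φ (x - y) ∂μ + μ (ball 0 r) := by
        rw [lintegral_add_right _ measurable_const, setLIntegral_const, one_mul]
    _ ≤ ∫⁻ x, φ (x - y) ∂μ + μ (ball 0 r) := by gcongr; exact Measure.restrict_le_self
    _ = ∫⁻ u in ball 0 1, ENNReal.ofReal ‖u‖⁻¹ ∂μ + μ (ball 0 r) := by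
        rw [lintegral_sub_right_eq_self φ y, lintegral_indicator measurableSet_ball]

section Kernel

variable {E : Type*} [NormedAddCommGroup E] [NormedSpace ℝ E] [FiniteDimensional ℝ E]
  [MeasurableSpace E] [BorelSpace E] {μ : Measure E} [μ.IsAddHaarMeasure]

theorem setLIntegral_ball_inv_norm_lt_top (hE : 1 < Module.finrank ℝ E) (r : ℝ) :
    ∫⁻ x in ball 0 r, ENNReal.ofReal ‖x‖⁻¹ ∂μ < ∞ := by
  refine Integrable.lintegral_lt_top (integrableOn_ball_of_norm_le_rpow (C := 1) (α := 1)
    hE.le (by exact_mod_cast hE) (ae_of_all _ fun x => ?_) (by fun_prop))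
  simp [Real.rpow_neg_one]

theorem ae_lintegral_mul_inv_norm_sub_ne_top (hE : 1 < Module.finrank ℝ E) {c : E → ℝ≥0∞}
    (hc : AEMeasurable c μ) (hc_fin : ∫⁻ y, c y ∂μ ≠ ∞) :
    ∀ᵐ x ∂μ, ∫⁻ y, c y * ENNReal.ofReal ‖x - y‖⁻¹ ∂μ ≠ ∞ := by
  suffices h : ∀ n : ℕ,
      ∀ᵐ x ∂μ.restrict (ball 0 n), ∫⁻ y, c y * ENNReal.ofReal ‖x - y‖⁻¹ ∂μ ≠ ∞ by
    have := (ae_restrict_iUnion_iff _ _).2 h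
    rwa [iUnion_ball_nat, Measure.restrict_univ] at this
  intro n
  have hck : AEMeasurable (fun p : E × E => c p.2 * ENNReal.ofReal ‖p.1 - p.2‖⁻¹)
      ((μ.restrict (ball 0 n)).prod μ) :=
    hc.comp_snd.mul (by fun_prop)
  refine (ae_lt_top' hck.lintegral_prod_right' (lt_top_iff_ne_top.1 ?_)).mono fun x hx => hx.ne
  calc ∫⁻ x in ball 0 n, ∫⁻ y, c y * ENNReal.ofReal ‖x - y‖⁻¹ ∂μ ∂μ
      = ∫⁻ y, c y * ∫⁻ x in ball 0 n, ENNReal.ofReal ‖x - y‖⁻¹ ∂μ ∂μ := by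
        rw [lintegral_lintegral_swap hck]
        exact lintegral_congr fun y => lintegral_const_mul _ (by fun_prop)
    _ ≤ ∫⁻ y, c y * (∫⁻ u in ball 0 1, ENNReal.ofReal ‖u‖⁻¹ ∂μ + μ (ball 0 n)) ∂μ := by
        gcongr with y
        exact setLIntegral_ball_inv_norm_sub_le y n
    _ < ∞ := by
        rw [lintegral_mul_const'' _ hc]
        exact mul_lt_top hc_fin.lt_top
          (add_lt_top.2 ⟨setLIntegral_ball_inv_norm_lt_top hE 1, measure_ball_lt_top⟩)

end Kernel

theorem norm_sub_mul_abs_inv_sub_inv_le {G : Type*} [SeminormedAddCommGroup G] {x y : G}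
    (hxy : ‖x - y‖ ≠ 0) (z : G) :
    ‖x - z‖ * |‖x - y‖⁻¹ - ‖x - z‖⁻¹| ≤ ‖y - z‖ * ‖x - y‖⁻¹ := by
  rcases eq_or_ne ‖x - z‖ 0 with hxz | hxz
  · rw [hxz, zero_mul]
    positivity
  have hdiff : ‖x - z‖ * (‖x - y‖⁻¹ - ‖x - z‖⁻¹) = (‖x - z‖ - ‖x - y‖) * ‖x - y‖⁻¹ := by
    field_simp
  have htri : |‖x - z‖ - ‖x - y‖| ≤ ‖y - z‖ := by
    simpa using abs_norm_sub_norm_le (x - z) (x - y)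
  calc ‖x - z‖ * |‖x - y‖⁻¹ - ‖x - z‖⁻¹| = |‖x - z‖ - ‖x - y‖| * ‖x - y‖⁻¹ := by
        rw [← abs_norm (x - z), ← abs_mul, abs_norm, hdiff, abs_mul, abs_inv, abs_norm]
    _ ≤ ‖y - z‖ * ‖x - y‖⁻¹ := by gcongr

theorem ofReal_norm_sub_mul_abs_integral_le {G : Type*} [NormedAddCommGroup G]
    [MeasurableSpace G] {μ : Measure G} [NullSingletonClass μ] {b : G → ℝ} (hb : Integrable b μ)
    (hb0 : ∫ y, b y ∂μ = 0) (x z : G) :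
    ENNReal.ofReal (‖x - z‖ * |∫ y, b y * ‖x - y‖⁻¹ ∂μ|) ≤
      ∫⁻ y, ENNReal.ofReal (‖y - z‖ * |b y|) * ENNReal.ofReal ‖x - y‖⁻¹ ∂μ := by
  by_cases hint : Integrable (fun y => b y * ‖x - y‖⁻¹) μ
  swap
  · simp [integral_undef hint]
  have hcancel : ∫ y, b y * ‖x - y‖⁻¹ ∂μ = ∫ y, b y * (‖x - y‖⁻¹ - ‖x - z‖⁻¹) ∂μ := by
    simp_rw [mul_sub]
    rw [integral_sub hint (hb.mul_const _), integral_mul_const, hb0, zero_mul, sub_zero]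
  rw [ENNReal.ofReal_mul (norm_nonneg _), ← Real.enorm_eq_ofReal_abs, hcancel]
  calc ENNReal.ofReal ‖x - z‖ * ‖∫ y, b y * (‖x - y‖⁻¹ - ‖x - z‖⁻¹) ∂μ‖ₑ
      ≤ ENNReal.ofReal ‖x - z‖ * ∫⁻ y, ‖b y * (‖x - y‖⁻¹ - ‖x - z‖⁻¹)‖ₑ ∂μ := by
        gcongr
        exact enorm_integral_le_lintegral_enorm _
    _ = ∫⁻ y, ENNReal.ofReal (|b y| * (‖x - z‖ * |‖x - y‖⁻¹ - ‖x - z‖⁻¹|)) ∂μ := by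
        rw [← lintegral_const_mul' _ _ ofReal_ne_top]
        refine lintegral_congr fun y => ?_
        rw [Real.enorm_eq_ofReal_abs, ← ENNReal.ofReal_mul (norm_nonneg _), abs_mul]
        ring_nf
    _ ≤ ∫⁻ y, ENNReal.ofReal (‖y - z‖ * |b y|) * ENNReal.ofReal ‖x - y‖⁻¹ ∂μ := by
        refine lintegral_mono_ae ((Measure.ae_ne μ x).mono fun y hy => ?_)
        rw [← ENNReal.ofReal_mul (by positivity)]
        refine ENNReal.ofReal_le_ofReal ?_
        calc |b y| * (‖x - z‖ * |‖x - y‖⁻¹ - ‖x - z‖⁻¹|) ≤ |b y| * (‖y - z‖ * ‖x - y‖⁻¹) :=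
              mul_le_mul_of_nonneg_left (norm_sub_mul_abs_inv_sub_inv_le
                (norm_ne_zero_iff.2 (sub_ne_zero.2 hy.symm)) z) (abs_nonneg _)
          _ = ‖y - z‖ * |b y| * ‖x - y‖⁻¹ := by ring

theorem invLap_eq (b : E3 → ℝ) (x : E3) :
    invLap b x = (4 * π)⁻¹ * ∫ y, b y * ‖x - y‖⁻¹ := by
  rw [invLap, ← integral_const_mul]
  congr 1 with y
  rw [div_eq_mul_inv, mul_inv]
  ring

theorem ofReal_norm_sub_mul_abs_mul_invLap_le {b : E3 → ℝ} (hb : Integrable b)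
    (hb0 : ∫ y, b y = 0) (v : ℝ) (x z : E3) :
    ENNReal.ofReal (‖x - z‖ * |v * invLap b x|) ≤ ENNReal.ofReal (4 * π)⁻¹ *
      (ENNReal.ofReal |v| * ∫⁻ y, ENNReal.ofReal (‖y - z‖ * |b y|) * ENNReal.ofReal ‖x - y‖⁻¹) := by
  have hrearr : ‖x - z‖ * |v * invLap b x| =
      (4 * π)⁻¹ * (|v| * (‖x - z‖ * |∫ y, b y * ‖x - y‖⁻¹|)) := by
    rw [invLap_eq, abs_mul, abs_mul, abs_of_pos (by positivity : (0 : ℝ) < (4 * π)⁻¹)]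
    ring
  rw [hrearr, ENNReal.ofReal_mul (by positivity), ENNReal.ofReal_mul (abs_nonneg _)]
  gcongr
  exact ofReal_norm_sub_mul_abs_integral_le hb hb0 x z

/-- there is an absolute constant `C` so that for every mean-zero
`b ∈ L¹(ℝ³)` with `‖|y−z| b(y)‖_{L¹} < ∞` and every `V` of global Kato norm `≤ K`,
`∫ |x−z| |[V(−Δ)^{−1}b](x)| dx ≤ C K ‖|y−z| b(y)‖_{L¹}`; i.e. `V(−Δ)^{−1}` preserves
the weighted space `|y−z|^{−1}L¹` on mean-zero functions. -/
theorem stmt17 :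
    ∃ C : ℝ, 0 < C ∧
      ∀ (V b : E3 → ℝ) (K : ℝ) (z : E3), 0 ≤ K →
        Integrable b →
        (∫ y, b y = 0) →
        Integrable (fun y => ‖y - z‖ * |b y|) →
        (∀ y : E3, ∫⁻ x, ENNReal.ofReal (|V x| / ‖x - y‖) ≤ ENNReal.ofReal K) →
        ∫⁻ x, ENNReal.ofReal (‖x - z‖ * |V x * invLap b x|) ≤
          ENNReal.ofReal (C * K * ∫ y, ‖y - z‖ * |b y|) := by
  refine ⟨(4 * π)⁻¹, by positivity, fun V b K z hK hb hb0 hbz hV => ?_⟩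
  set c : E3 → ℝ≥0∞ := fun y => ENNReal.ofReal (‖y - z‖ * |b y|)
  have hc : ∫⁻ y, c y = ENNReal.ofReal (∫ y, ‖y - z‖ * |b y|) :=
    (ofReal_integral_eq_lintegral_ofReal hbz (ae_of_all _ fun y => by positivity)).symm
  have hdim : 1 < Module.finrank ℝ E3 := by simp
  have hkato : ∀ y, ∫⁻ x, ENNReal.ofReal |V x| * ENNReal.ofReal ‖x - y‖⁻¹ ≤ ENNReal.ofReal K := by
    simpa only [div_eq_mul_inv, ← ENNReal.ofReal_mul (abs_nonneg _)] using hV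
  calc ∫⁻ x, ENNReal.ofReal (‖x - z‖ * |V x * invLap b x|)
      ≤ ENNReal.ofReal (4 * π)⁻¹ *
          ∫⁻ x, ENNReal.ofReal |V x| * ∫⁻ y, c y * ENNReal.ofReal ‖x - y‖⁻¹ := by
        rw [← lintegral_const_mul' _ _ ofReal_ne_top]
        exact lintegral_mono fun x => ofReal_norm_sub_mul_abs_mul_invLap_le hb hb0 (V x) x z
    _ ≤ ENNReal.ofReal (4 * π)⁻¹ * (ENNReal.ofReal K * ∫⁻ y, c y) := by
        gcongr
        refine lintegral_mul_lintegral_mul_le (by fun_prop) (by fun_prop)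
          (ae_lintegral_mul_inv_norm_sub_ne_top hdim (by fun_prop) ?_) hkato
        simp [hc]
    _ = ENNReal.ofReal ((4 * π)⁻¹ * K * ∫ y, ‖y - z‖ * |b y|) := by
        rw [hc, ← ENNReal.ofReal_mul hK, ← ENNReal.ofReal_mul (by positivity), mul_assoc]
end
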